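/- The bijection between split graphs on n vertices and XY-graphs on n vertices with no isolates in Y (obtained from an S-max KS-partition by setting X = S, Y = K and deleting edges within K) maps unbalanced split graphs exactly to XY-graphs having a universal vertex in X, and balanced split graphs exactly to XY-graphs with no universal vertex in X. -/

import Mathlib

open SimpleGraph
attribute [local instance] Classical.propDecidable

variable {V : Type*} [Fintype V] [DecidableEq V]

/-- A set of vertices is stable (independent) if no two of its elements are adjacent. -/
def IsStableSet (G : SimpleGraph V) (s : Set V) : Prop :=
  s.Pairwise fun a b => ¬ G.Adj a b

/-- The clique number ω(G). -/
noncomputable def omegaNum (G : SimpleGraph V) : ℕ :=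
  Finset.univ.sup fun s : Finset V => if G.IsClique (s : Set V) then s.card else 0

/-- The independence number α(G). -/
noncomputable def alphaNum (G : SimpleGraph V) : ℕ :=
  Finset.univ.sup fun s : Finset V => if IsStableSet G (s : Set V) then s.card else 0

/-- A KS-partition of `G`: a partition of the vertex set into a clique `K` and a stable set `S`. -/
def IsKSPartition (G : SimpleGraph V) (K S : Finset V) : Prop :=
  Disjoint K S ∧ K ∪ S = Finset.univ ∧ G.IsClique (K : Set V) ∧ IsStableSet G (S : Set V)

/-- `G` is a split graph. -/
def IsSplit (G : SimpleGraph V) : Prop := ∃ K S : Finset V, IsKSPartition G K S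

/-- A split graph is balanced if it has a KS-partition with `|K| = ω(G)` and `|S| = α(G)`. -/
def IsBalanced (G : SimpleGraph V) : Prop :=
  ∃ K S : Finset V, IsKSPartition G K S ∧ K.card = omegaNum G ∧ S.card = alphaNum G

/-- The bipartite graph obtained from a split graph with KS-partition `(K, S)` by
deleting all edges within `K`: only the edges between `S` and `K` remain. -/
def crossGraph (G : SimpleGraph V) (K S : Finset V) : SimpleGraph V where
  Adj u v := G.Adj u v ∧ ((u ∈ S ∧ v ∈ K) ∨ (u ∈ K ∧ v ∈ S))
  symm := by
    constructor
    intro u v h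
    exact ⟨h.1.symm, by tauto⟩
  loopless := ⟨fun v h => G.irrefl h.1⟩

/-!
Take an S-max KS-partition `(K, S)`. If some `x ∈ S` is adjacent to all of `K`, then `K ∪ {x}` is
a clique, so `ω(G) > |K| = |V| - α(G)` and no partition can reach both `ω` and `α`. Otherwise a
clique meets `S` in at most one vertex `x`, and it must miss a non-neighbour of `x` in `K`, so
`ω(G) = |K|` and `(K, S)` itself is balanced.
-/

lemma card_le_omegaNum_of_isClique (G : SimpleGraph V) {s : Finset V}
    (hs : G.IsClique (s : Set V)) : s.card ≤ omegaNum G := by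
  simpa [hs, omegaNum] using Finset.le_sup (f := fun s : Finset V =>
    if G.IsClique (s : Set V) then s.card else 0) (Finset.mem_univ s)

lemma omegaNum_le_of_forall_isClique (G : SimpleGraph V) {n : ℕ}
    (h : ∀ s : Finset V, G.IsClique (s : Set V) → s.card ≤ n) : omegaNum G ≤ n :=
  Finset.sup_le fun s _ => by split_ifs with hs <;> simp [h s, hs]

namespace IsKSPartition

variable {G : SimpleGraph V} {K S : Finset V}

lemma card_add_card (h : IsKSPartition G K S) : K.card + S.card = Fintype.card V := by
  rw [← Finset.card_union_of_disjoint h.1, h.2.1, Finset.card_univ]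

lemma mem_of_notMem (h : IsKSPartition G K S) {v : V} (hv : v ∉ S) : v ∈ K :=
  (Finset.mem_union.1 (h.2.1 ▸ Finset.mem_univ v)).resolve_right hv

lemma isBalanced_iff_omegaNum_eq_card (h : IsKSPartition G K S) (hS : S.card = alphaNum G) :
    IsBalanced G ↔ omegaNum G = K.card := by
  constructor
  · rintro ⟨K', S', h', hK', hS'⟩
    have := h.card_add_card
    have := h'.card_add_card
    omega
  · exact fun hK => ⟨K, S, h, hK.symm, hS⟩

lemma isClique_insert (h : IsKSPartition G K S) {x : V} (hx : ∀ y ∈ K, G.Adj x y) :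
    G.IsClique ((insert x K : Finset V) : Set V) := by
  rw [Finset.coe_insert]
  exact h.2.2.1.insert fun y hy _ => hx y hy

lemma lt_omegaNum_of_forall_adj (h : IsKSPartition G K S) {x : V} (hxS : x ∈ S)
    (hx : ∀ y ∈ K, G.Adj x y) : K.card < omegaNum G := by
  have hxK : x ∉ K := Finset.disjoint_right.mp h.1 hxS
  simpa [Finset.card_insert_of_notMem hxK] using
    card_le_omegaNum_of_isClique G (h.isClique_insert hx)

lemma mem_of_isClique (h : IsKSPartition G K S) {C : Finset V} (hC : G.IsClique (C : Set V))
    {x z : V} (hxC : x ∈ C) (hxS : x ∈ S) (hzC : z ∈ C) (hzx : z ≠ x) : z ∈ K :=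
  h.mem_of_notMem fun hzS => h.2.2.2 (Finset.mem_coe.2 hxS) (Finset.mem_coe.2 hzS) hzx.symm
    (hC (Finset.mem_coe.2 hxC) (Finset.mem_coe.2 hzC) hzx.symm)

lemma card_le_of_isClique (h : IsKSPartition G K S)
    (hno : ∀ x ∈ S, ∃ y ∈ K, ¬ G.Adj x y) {C : Finset V} (hC : G.IsClique (C : Set V)) :
    C.card ≤ K.card := by
  by_cases hCS : ∃ x ∈ C, x ∈ S
  · obtain ⟨x, hxC, hxS⟩ := hCS
    obtain ⟨y, hyK, hxy⟩ := hno x hxS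
    have hsub : C ⊆ insert x (K.erase y) := by
      intro z hzC
      by_cases hzx : z = x
      · simp [hzx]
      have hzy : z ≠ y := by
        rintro rfl
        exact hxy (hC (Finset.mem_coe.2 hxC) (Finset.mem_coe.2 hzC) (Ne.symm hzx))
      exact Finset.mem_insert_of_mem
        (Finset.mem_erase.2 ⟨hzy, h.mem_of_isClique hC hxC hxS hzC hzx⟩)
    calc C.card ≤ (insert x (K.erase y)).card := Finset.card_le_card hsub
      _ ≤ (K.erase y).card + 1 := Finset.card_insert_le _ _
      _ = K.card := Finset.card_erase_add_one hyK
  · push Not at hCS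
    exact Finset.card_le_card fun z hz => h.mem_of_notMem (hCS z hz)

lemma omegaNum_eq_card (h : IsKSPartition G K S) (hno : ∀ x ∈ S, ∃ y ∈ K, ¬ G.Adj x y) :
    omegaNum G = K.card :=
  le_antisymm (omegaNum_le_of_forall_isClique G fun _ => h.card_le_of_isClique hno)
    (card_le_omegaNum_of_isClique G h.2.2.1)

lemma isBalanced_iff_not_exists_forall_adj (h : IsKSPartition G K S)
    (hS : S.card = alphaNum G) :
    IsBalanced G ↔ ¬ ∃ x ∈ S, ∀ y ∈ K, G.Adj x y := by
  rw [h.isBalanced_iff_omegaNum_eq_card hS]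
  constructor
  · rintro hω ⟨x, hxS, hx⟩
    exact (h.lt_omegaNum_of_forall_adj hxS hx).ne' hω
  · intro hno
    push Not at hno
    exact h.omegaNum_eq_card hno

end IsKSPartition

/-- Under the bijection from split graphs to XY-graphs with no isolates in `Y`
(from an S-max KS-partition, with `X = S`, `Y = K`, deleting the edges within `K`),
a split graph is unbalanced iff the resulting XY-graph has a universal vertex in `X`,
and balanced iff it has no universal vertex in `X`. -/
theorem balance_correspondence_xy (G : SimpleGraph V) (K S : Finset V)
    (h : IsKSPartition G K S) (hS : S.card = alphaNum G) :
    (¬ IsBalanced G ↔ ∃ x ∈ S, ∀ y ∈ K, (crossGraph G K S).Adj x y) ∧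
    (IsBalanced G ↔ ¬ ∃ x ∈ S, ∀ y ∈ K, (crossGraph G K S).Adj x y) := by
  have hcross : (∃ x ∈ S, ∀ y ∈ K, (crossGraph G K S).Adj x y) ↔
      ∃ x ∈ S, ∀ y ∈ K, G.Adj x y :=
    exists_congr fun _ => and_congr_right fun hx =>
      forall₂_congr fun _ hy => ⟨And.left, fun hxy => ⟨hxy, Or.inl ⟨hx, hy⟩⟩⟩
  have hbal := h.isBalanced_iff_not_exists_forall_adj hS
  rw [hcross]
  exact ⟨by rw [hbal, not_not], hbal⟩
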